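/- (Absolute convergence of the band-transition double series.) Let H be a complex Hilbert space, (v_n)_{n∈ℕ} an orthonormal family in H, and λ : ℕ → [0,∞) a sequence such that Σ_n (1+λ_n)^{−s} < ∞ for every s > 1. Let (w_n)_{n∈ℕ} be vectors of H satisfying: (i) ‖w_n‖ ≤ M (1+λ_n)^{1/2} for all n, for some M > 0, and (ii) ⟨w_n, v_m⟩ = −conj(⟨w_m, v_n⟩) for all n, m. Let z ∈ ℂ and c > 0 be such that |z − λ_n| ≥ c (1+λ_n) for every n. Then the double family ( (n,m) ↦ |⟨w_m, v_n⟩|² / ( |z − λ_n| · |z − λ_m|² ) ) is summable over ℕ × ℕ. -/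

import Mathlib

/-!
Write `b n = 1 + λ n` and `q m n = ‖⟪w m, v n⟫‖²`; the term is at most `c⁻³ q m n / (b n * (b m)²)`.
Bessel's inequality gives `∑ₙ q m n ≤ M² b m`, which on its own only leads to the divergent
borderline series `∑ₘ (b m)⁻¹`. Antisymmetry supplies the transposed bound `q m n ≤ M² b n`.
Splitting according to whether `b m ≤ (b n)²`, the term is dominated by `q m n * b m ^ (-5/2)`,
summable by Bessel against `∑ₘ b m ^ (-3/2)`, plus `M² (b n * b m) ^ (-4/3)`, a product of two
convergent series.
-/

open scoped InnerProductSpace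

lemma div_mul_sq_le_add_rpow {q K x y : ℝ} (hq : 0 ≤ q) (hqK : q ≤ K * x) (hx : 1 ≤ x)
    (hy : 1 ≤ y) :
    q / (x * y ^ 2) ≤ q * y ^ (-(5 / 2) : ℝ) + K * (x ^ (-(4 / 3) : ℝ) * y ^ (-(4 / 3) : ℝ)) := by
  have hx0 : 0 < x := one_pos.trans_le hx
  have hy0 : 0 < y := one_pos.trans_le hy
  have hK : 0 ≤ K := nonneg_of_mul_nonneg_left (hq.trans hqK) hx0
  rcases le_or_gt y (x ^ 2) with hyx | hxy
  · have hsqrt : √y ≤ x := Real.sqrt_le_iff.mpr ⟨hx0.le, hyx⟩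
    have hpow : y ^ (5 / 2 : ℝ) = √y * y ^ 2 := by
      rw [Real.sqrt_eq_rpow, ← Real.rpow_add_natCast hy0.ne']; norm_num
    calc q / (x * y ^ 2) ≤ q / y ^ (5 / 2 : ℝ) := by
          rw [hpow]; gcongr
      _ = q * y ^ (-(5 / 2) : ℝ) := by rw [Real.rpow_neg hy0.le, div_eq_mul_inv]
      _ ≤ _ := le_add_of_nonneg_right (by positivity)
  · have hxy' : y ^ (-(2 / 3) : ℝ) ≤ x ^ (-(4 / 3) : ℝ) := by
      rw [show (-(4 / 3) : ℝ) = ((2 : ℕ) : ℝ) * (-(2 / 3)) by norm_num,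
        Real.rpow_natCast_mul hx0.le]
      exact Real.rpow_le_rpow_of_nonpos (by positivity) hxy.le (by norm_num)
    calc q / (x * y ^ 2) ≤ K * x / (x * y ^ 2) := by gcongr
      _ = K * (y ^ (-(2 / 3) : ℝ) * y ^ (-(4 / 3) : ℝ)) := by
          rw [← Real.rpow_add hy0, show (-(2 / 3) + -(4 / 3) : ℝ) = -((2 : ℕ) : ℝ) by norm_num,
            Real.rpow_neg hy0.le, Real.rpow_natCast]
          field_simp
      _ ≤ K * (x ^ (-(4 / 3) : ℝ) * y ^ (-(4 / 3) : ℝ)) := by gcongr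
      _ ≤ _ := le_add_of_nonneg_left (by positivity)

lemma div_mul_sq_le_of_mul_le {q c x y X Y : ℝ} (hq : 0 ≤ q) (hc : 0 < c) (hx : 0 < x)
    (hy : 0 < y) (hX : c * x ≤ X) (hY : c * y ≤ Y) :
    q / (X * Y ^ 2) ≤ (c ^ 3)⁻¹ * (q / (x * y ^ 2)) := by
  have hX0 : 0 ≤ X := (mul_pos hc hx).le.trans hX
  calc q / (X * Y ^ 2) ≤ q / ((c * x) * (c * y) ^ 2) := by gcongr
    _ = (c ^ 3)⁻¹ * (q / (x * y ^ 2)) := by field_simp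

lemma summable_prod_mul_rpow_of_tsum_le {ι κ : Type*} {q : ι → κ → ℝ} {b : ι → ℝ} {K s : ℝ}
    (hb : ∀ i, 0 < b i) (hq : ∀ i j, 0 ≤ q i j) (hrow : ∀ i, Summable (q i))
    (htsum : ∀ i, ∑' j, q i j ≤ K * b i) (hs : Summable fun i => b i ^ (1 - s)) :
    Summable fun p : ι × κ => q p.1 p.2 * b p.1 ^ (-s) := by
  have hterm (i : ι) (j : κ) : 0 ≤ q i j * b i ^ (-s) :=
    mul_nonneg (hq i j) (Real.rpow_nonneg (hb i).le _)
  refine (summable_prod_of_nonneg fun p => hterm p.1 p.2).2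
    ⟨fun i => (hrow i).mul_right (b i ^ (-s)), (hs.mul_left K).of_nonneg_of_le
      (fun i => tsum_nonneg fun j => hterm i j) fun i => ?_⟩
  calc ∑' j, q i j * b i ^ (-s) = (∑' j, q i j) * b i ^ (-s) := tsum_mul_right
    _ ≤ K * b i * b i ^ (-s) :=
        mul_le_mul_of_nonneg_right (htsum i) (Real.rpow_nonneg (hb i).le _)
    _ = K * b i ^ (1 - s) := by
        rw [mul_assoc, sub_eq_add_neg, Real.rpow_add (hb i), Real.rpow_one]

theorem summable_div_mul_sq_of_tsum_le {ι : Type*} {q : ι → ι → ℝ} {b : ι → ℝ} {K : ℝ}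
    (hb : ∀ i, 1 ≤ b i) (hsum : ∀ s : ℝ, 1 < s → Summable fun i => b i ^ (-s))
    (hq : ∀ i j, 0 ≤ q i j) (hrow : ∀ i, Summable (q i))
    (htsum : ∀ i, ∑' j, q i j ≤ K * b i) (hcol : ∀ i j, q i j ≤ K * b j) :
    Summable fun p : ι × ι => q p.2 p.1 / (b p.1 * b p.2 ^ 2) := by
  have hb0 i : 0 < b i := one_pos.trans_le (hb i)
  have hBessel : Summable fun p : ι × ι => q p.2 p.1 * b p.2 ^ (-(5 / 2) : ℝ) :=
    (summable_prod_mul_rpow_of_tsum_le hb0 hq hrow htsum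
      (by simpa only [show (1 - 5 / 2 : ℝ) = -(3 / 2) by norm_num] using
        hsum (3 / 2) (by norm_num))).prod_symm
  have hprod : Summable fun p : ι × ι => K * (b p.1 ^ (-(4 / 3) : ℝ) * b p.2 ^ (-(4 / 3) : ℝ)) :=
    ((hsum _ (by norm_num)).mul_of_nonneg (hsum _ (by norm_num))
      (fun i => Real.rpow_nonneg (hb0 i).le _) (fun i => Real.rpow_nonneg (hb0 i).le _)).mul_left K
  exact (hBessel.add hprod).of_nonneg_of_le (fun p => div_nonneg (hq _ _)
    (mul_nonneg (hb0 _).le (pow_nonneg (hb0 _).le 2)))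
    fun p => div_mul_sq_le_add_rpow (hq _ _) (hcol _ _) (hb _) (hb _)

theorem band_transition_double_series_summable_general
    {H : Type*} [NormedAddCommGroup H] [InnerProductSpace ℂ H]
    (v : ℕ → H) (hv : Orthonormal ℂ v)
    (lam : ℕ → ℝ) (hlam : ∀ n, 0 ≤ lam n)
    (hsum : ∀ s : ℝ, 1 < s → Summable fun n => (1 + lam n) ^ (-s))
    (w : ℕ → H) (M : ℝ)
    (hw : ∀ n, ‖w n‖ ≤ M * Real.sqrt (1 + lam n))
    (hanti : ∀ n m, (inner ℂ (w n) (v m) : ℂ) = -(starRingEnd ℂ) (inner ℂ (w m) (v n) : ℂ))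
    (z : ℂ) (c : ℝ) (hc : 0 < c)
    (hz : ∀ n, c * (1 + lam n) ≤ ‖z - (lam n : ℂ)‖) :
    Summable fun p : ℕ × ℕ =>
      ‖(inner ℂ (w p.2) (v p.1) : ℂ)‖ ^ 2 /
        (‖z - (lam p.1 : ℂ)‖ * ‖z - (lam p.2 : ℂ)‖ ^ 2) := by
  have hb n : 1 ≤ 1 + lam n := le_add_of_nonneg_right (hlam n)
  have hw_sq n : ‖w n‖ ^ 2 ≤ M ^ 2 * (1 + lam n) := by
    calc ‖w n‖ ^ 2 ≤ (M * √(1 + lam n)) ^ 2 := by gcongr; exact hw n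
      _ = M ^ 2 * (1 + lam n) := by rw [mul_pow, Real.sq_sqrt (by linarith [hb n])]
  have hrow m : Summable fun n => ‖⟪w m, v n⟫_ℂ‖ ^ 2 := by
    simpa only [norm_inner_symm] using hv.inner_products_summable (x := w m)
  have htsum m : ∑' n, ‖⟪w m, v n⟫_ℂ‖ ^ 2 ≤ M ^ 2 * (1 + lam m) := by
    simpa only [norm_inner_symm] using (hv.tsum_inner_products_le (w m)).trans (hw_sq m)
  have hcol m n : ‖⟪w m, v n⟫_ℂ‖ ^ 2 ≤ M ^ 2 * (1 + lam n) := by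
    calc ‖⟪w m, v n⟫_ℂ‖ ^ 2 = ‖⟪w n, v m⟫_ℂ‖ ^ 2 := by rw [hanti, norm_neg, RCLike.norm_conj]
      _ ≤ ‖w n‖ ^ 2 := by
          gcongr; simpa only [hv.1 m, mul_one] using norm_inner_le_norm (𝕜 := ℂ) (w n) (v m)
      _ ≤ _ := hw_sq n
  exact ((summable_div_mul_sq_of_tsum_le hb hsum (fun _ _ => by positivity) hrow htsum
    hcol).mul_left (c ^ 3)⁻¹).of_nonneg_of_le (fun p => by positivity) fun p =>
    div_mul_sq_le_of_mul_le (by positivity) hc (by linarith [hb p.1]) (by linarith [hb p.2])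
      (hz _) (hz _)

/-- (Absolute convergence of the band-transition double series.)
`H` a complex Hilbert space, `(v_n)` orthonormal, `λ_n ≥ 0` with `Σ (1+λ_n)^{−s} < ∞`
for all `s > 1`, `‖w_n‖ ≤ M (1+λ_n)^{1/2}`, `⟨w_n, v_m⟩ = −conj ⟨w_m, v_n⟩`, and
`|z − λ_n| ≥ c (1+λ_n)`.  Then `(n,m) ↦ |⟨w_m, v_n⟩|² / (|z−λ_n|·|z−λ_m|²)` is summable. -/
theorem band_transition_double_series_summable
    {H : Type*} [NormedAddCommGroup H] [InnerProductSpace ℂ H]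
    (v : ℕ → H) (hv : Orthonormal ℂ v)
    (lam : ℕ → ℝ) (hlam : ∀ n, 0 ≤ lam n)
    (hsum : ∀ s : ℝ, 1 < s → Summable fun n => (1 + lam n) ^ (-s))
    (w : ℕ → H) (M : ℝ) (hM : 0 < M)
    (hw : ∀ n, ‖w n‖ ≤ M * Real.sqrt (1 + lam n))
    (hanti : ∀ n m, (inner ℂ (w n) (v m) : ℂ) = -(starRingEnd ℂ) (inner ℂ (w m) (v n) : ℂ))
    (z : ℂ) (c : ℝ) (hc : 0 < c)
    (hz : ∀ n, c * (1 + lam n) ≤ ‖z - (lam n : ℂ)‖) :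
    Summable fun p : ℕ × ℕ =>
      ‖(inner ℂ (w p.2) (v p.1) : ℂ)‖ ^ 2 /
        (‖z - (lam p.1 : ℂ)‖ * ‖z - (lam p.2 : ℂ)‖ ^ 2) :=
  band_transition_double_series_summable_general v hv lam hlam hsum w M hw hanti z c hc hz
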